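/- arXiv:1504.02608 — 6 statements merged into one kernel-verified Lean document; each statement's English description precedes it below -/
import Mathlib

section
/- For any type P ∈ P_n(X) and any distribution Q on X, the probability under Q^n of the type class T_P satisfies |P_n(X)|^{-1} · exp(-n·D(P‖Q)) ≤ Q^n(T_P) ≤ exp(-n·D(P‖Q)). -/
/-!
Write `P = c / n`. Each sequence of type `P` has `Q^n`-probability `∏ₐ Q(a)^{c a}`, and when `Q`
charges the support of `P` this is `exp(-n D(P‖Q)) · ∏ₐ P(a)^{c a}`. Hence
`Q^n(T_P) = exp(-n D(P‖Q)) · P^n(T_P)`, and it remains to see `|P_n(X)|⁻¹ ≤ P^n(T_P) ≤ 1`.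
The upper bound is trivial. For the lower one, `T_P` is the most likely type class under `P^n`:
from `|T_R| = n! / ∏ₐ (n R(a))!` and `k! · k^l ≤ l! · k^k` one gets `P^n(T_R) ≤ P^n(T_P)`
for every type `R`, and the `|P_n(X)|` type classes partition `X^n`. To stay in `ℕ`, `P` is replaced
throughout by the weights `c`, whose `n`-fold product has total mass `n^n`.
-/

open Finset Nat

theorem Nat.factorial_mul_pow_le_factorial_mul_pow (c d : ℕ) : c ! * c ^ d ≤ d ! * c ^ c := by
  rcases le_total c d with h | h
  · calc c ! * c ^ d = c ! * c ^ (d - c) * c ^ c := by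
          rw [mul_assoc, ← pow_add, Nat.sub_add_cancel h]
      _ ≤ d ! * c ^ c := by gcongr; exact factorial_mul_pow_sub_le_factorial h
  · calc c ! * c ^ d = d ! * c.descFactorial (c - d) * c ^ d := by
          rw [← factorial_mul_descFactorial (sub_le c d), Nat.sub_sub_self h]
      _ ≤ d ! * c ^ (c - d) * c ^ d := by gcongr; exact descFactorial_le_pow _ _
      _ = d ! * c ^ c := by rw [mul_assoc, ← pow_add, Nat.sub_add_cancel h]

theorem card_fiber_eq_iff_exists_perm {α X : Type*} [Fintype α] [DecidableEq X] {x y : α → X} :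
    (∀ a, #{i | y i = a} = #{i | x i = a}) ↔ ∃ σ : Equiv.Perm α, x ∘ σ = y := by
  constructor
  · intro h
    have e a : {i // y i = a} ≃ {i // x i = a} :=
      Fintype.equivOfCardEq (by simpa only [Fintype.card_subtype] using h a)
    exact ⟨(Equiv.sigmaFiberEquiv y).symm.trans
      ((Equiv.sigmaCongrRight e).trans (Equiv.sigmaFiberEquiv x)),
      funext fun i => (e (y i) ⟨i, rfl⟩).2⟩
  · rintro ⟨σ, rfl⟩ a
    simp only [← Fintype.card_subtype]
    exact Fintype.card_congr (σ.subtypeEquiv fun _ => Iff.rfl)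

section TypeClass

variable {X : Type*} [Fintype X] [DecidableEq X] {n : ℕ}

variable (X n) in
def types : Finset (X → Fin (n + 1)) :=
  univ.filter fun d => ∑ a, (d a : ℕ) = n

def typeOf (x : Fin n → X) (a : X) : Fin (n + 1) :=
  ⟨#{i | x i = a}, Nat.lt_succ_of_le ((card_le_univ _).trans_eq (Fintype.card_fin n))⟩

def typeClass (n : ℕ) (c : X → ℕ) : Finset (Fin n → X) :=
  univ.filter fun x => ∀ a, #{i | x i = a} = c a

theorem typeOf_mem_types (x : Fin n → X) : typeOf x ∈ types X n := by
  simpa [types, typeOf] using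
    (card_eq_sum_card_fiberwise fun i (_ : i ∈ univ) => mem_univ (x i)).symm

theorem filter_typeOf_eq (d : X → Fin (n + 1)) :
    univ.filter (fun x : Fin n → X => typeOf x = d) = typeClass n fun a => d a := by
  simp only [typeClass, funext_iff, Fin.ext_iff, typeOf]

theorem typeClass_nonempty {c : X → ℕ} (hc : ∑ a, c a = n) : (typeClass n c).Nonempty := by
  obtain e : Fin n ≃ Σ a, Fin (c a) := Fintype.equivOfCardEq (by simp [hc])
  refine ⟨fun i => (e i).1, mem_filter.2 ⟨mem_univ _, fun a => ?_⟩⟩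
  rw [← Fintype.card_subtype, Fintype.card_congr
    ((e.subtypeEquiv fun _ => Iff.rfl).trans (Equiv.sigmaSubtype a)), Fintype.card_fin]

theorem card_typeClass_mul_prod_factorial {c : X → ℕ} (hc : ∑ a, c a = n) :
    #(typeClass n c) * ∏ a, (c a)! = n ! := by
  obtain ⟨x₀, hx₀⟩ := typeClass_nonempty hc
  have hx₀ : ∀ a, #{i | x₀ i = a} = c a := (mem_filter.1 hx₀).2
  have horbit : MulAction.orbit (Equiv.Perm (Fin n))ᵈᵐᵃ x₀ = typeClass n c := by
    ext x
    simp only [MulAction.mem_orbit_iff, mem_coe, typeClass, mem_filter, mem_univ, true_and,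
      ← hx₀, card_fiber_eq_iff_exists_perm, DomMulAct.mk.surjective.exists]
    rfl
  have hstab : Nat.card (MulAction.stabilizer (Equiv.Perm (Fin n))ᵈᵐᵃ x₀) = ∏ a, (c a)! := by
    rw [Nat.card_congr (Equiv.subtypeEquiv (q := fun g : Equiv.Perm (Fin n) => x₀ ∘ g = x₀)
      DomMulAct.mk.symm fun _ => DomMulAct.mem_stabilizer_iff), Nat.card_eq_fintype_card,
      DomMulAct.stabilizer_card]
    simp only [Fintype.card_subtype, hx₀]
  have := (MulAction.stabilizer (Equiv.Perm (Fin n))ᵈᵐᵃ x₀).card_mul_index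
  rw [MulAction.index_stabilizer, horbit, hstab, Set.ncard_coe_finset,
    Nat.card_congr DomMulAct.mk.symm, Nat.card_perm, Nat.card_fin] at this
  rw [mul_comm, this]

theorem sum_typeClass_prod {R : Type*} [CommSemiring R] (w : X → R) (c : X → ℕ) :
    ∑ x ∈ typeClass n c, ∏ i, w (x i) = #(typeClass n c) * ∏ a, w a ^ c a := by
  rw [sum_congr rfl fun x hx => ?_, sum_const, nsmul_eq_mul]
  rw [← prod_fiberwise' univ x w]
  exact prod_congr rfl fun a _ => by rw [prod_const, (mem_filter.1 hx).2 a]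

theorem sum_pow_eq_sum_types {R : Type*} [CommSemiring R] (w : X → R) (n : ℕ) :
    (∑ a, w a) ^ n = ∑ d ∈ types X n, #(typeClass n fun a => d a) * ∏ a, w a ^ (d a : ℕ) := by
  rw [Fintype.sum_pow, ← sum_fiberwise_of_maps_to fun x _ => typeOf_mem_types x]
  refine sum_congr rfl fun d _ => ?_
  rw [filter_typeOf_eq, sum_typeClass_prod]

theorem card_typeClass_mul_prod_pow_le {c d : X → ℕ} (hc : ∑ a, c a = n) (hd : ∑ a, d a = n) :
    #(typeClass n d) * ∏ a, c a ^ d a ≤ #(typeClass n c) * ∏ a, c a ^ c a := by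
  refine Nat.le_of_mul_le_mul_right ?_
    (prod_pos (s := univ) fun a _ => mul_pos (d a).factorial_pos (c a).factorial_pos)
  calc (#(typeClass n d) * ∏ a, c a ^ d a) * ∏ a, ((d a)! * (c a)!)
      = n ! * ∏ a, ((c a)! * c a ^ d a) := by
        rw [← card_typeClass_mul_prod_factorial hd, prod_mul_distrib, prod_mul_distrib]; ring
    _ ≤ n ! * ∏ a, ((d a)! * c a ^ c a) := Nat.mul_le_mul_left _
        (prod_le_prod' fun a _ => factorial_mul_pow_le_factorial_mul_pow (c a) (d a))
    _ = (#(typeClass n c) * ∏ a, c a ^ c a) * ∏ a, ((d a)! * (c a)!) := by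
        rw [← card_typeClass_mul_prod_factorial hc, prod_mul_distrib, prod_mul_distrib]; ring

theorem card_typeClass_mul_prod_pow_self_le {c : X → ℕ} (hc : ∑ a, c a = n) :
    #(typeClass n c) * ∏ a, c a ^ c a ≤ n ^ n := by
  calc #(typeClass n c) * ∏ a, c a ^ c a = ∑ x ∈ typeClass n c, ∏ i, c (x i) := by
        rw [sum_typeClass_prod, Nat.cast_id]
    _ ≤ ∑ x : Fin n → X, ∏ i, c (x i) := sum_le_sum_of_subset (subset_univ _)
    _ = n ^ n := by rw [← Fintype.sum_pow, hc]

theorem pow_self_le_card_types_mul {c : X → ℕ} (hc : ∑ a, c a = n) :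
    n ^ n ≤ #(types X n) * (#(typeClass n c) * ∏ a, c a ^ c a) := by
  calc n ^ n = ∑ d ∈ types X n, #(typeClass n fun a => d a) * ∏ a, c a ^ (d a : ℕ) := by
        simpa only [Nat.cast_id, hc] using sum_pow_eq_sum_types c n
    _ ≤ ∑ _d ∈ types X n, #(typeClass n c) * ∏ a, c a ^ c a :=
        sum_le_sum fun d hd => card_typeClass_mul_prod_pow_le hc (mem_filter.1 hd).2
    _ = #(types X n) * (#(typeClass n c) * ∏ a, c a ^ c a) := by rw [sum_const, smul_eq_mul]

theorem card_typeClass_mul_prod_pow_self_div_mem_Icc {c : X → ℕ} (hc : ∑ a, c a = n) :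
    ((#(typeClass n c) * ∏ a, c a ^ c a : ℕ) : ℝ) / n ^ n ∈ Set.Icc (#(types X n) : ℝ)⁻¹ 1 := by
  have hpow : (0 : ℝ) < n ^ n := by exact_mod_cast Nat.pow_self_pos
  have hup : ((#(typeClass n c) * ∏ a, c a ^ c a : ℕ) : ℝ) ≤ n ^ n := by
    exact_mod_cast card_typeClass_mul_prod_pow_self_le hc
  have hlow : (n : ℝ) ^ n ≤ #(types X n) * (#(typeClass n c) * ∏ a, c a ^ c a : ℕ) := by
    exact_mod_cast pow_self_le_card_types_mul hc
  have hN : (0 : ℝ) < #(types X n) := pos_of_mul_pos_left (hpow.trans_le hlow) (Nat.cast_nonneg _)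
  exact ⟨by rwa [le_div_iff₀ hpow, inv_mul_le_iff₀ hN], div_le_one_of_le₀ hup hpow.le⟩

end TypeClass

theorem Real.exp_neg_mul_mul_log_div_mul_pow_self {k n : ℕ} {q : ℝ} (hkn : k ≤ n)
    (hq : 0 < k → 0 < q) :
    Real.exp (-(n * ((k / n) * Real.log ((k / n) / q)))) * k ^ k = n ^ k * q ^ k := by
  rcases k.eq_zero_or_pos with rfl | hk
  · simp
  have hn : (0 : ℝ) < n := by exact_mod_cast hk.trans_le hkn
  have hq := hq hk
  rw [← mul_assoc, mul_div_cancel₀ _ hn.ne', ← Real.log_pow, Real.exp_neg,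
    Real.exp_log (by positivity), div_div, div_pow, inv_div, div_mul_cancel₀ _ (by positivity),
    mul_pow]

theorem exp_neg_mul_klDiv_mul_prod_pow_self {X : Type*} [Fintype X] {n : ℕ} {c : X → ℕ}
    (hc : ∑ a, c a = n) {Q : X → ℝ} (hQ : ∀ a, 0 < c a → 0 < Q a) :
    Real.exp (-(n * ∑ a, ((c a : ℝ) / n) * Real.log (((c a : ℝ) / n) / Q a))) *
      ∏ a, (c a : ℝ) ^ c a = n ^ n * ∏ a, Q a ^ c a := by
  have hcn a : c a ≤ n := hc ▸ single_le_sum (fun _ _ => Nat.zero_le _) (mem_univ a)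
  rw [mul_sum, ← sum_neg_distrib, Real.exp_sum, ← prod_mul_distrib,
    prod_congr rfl fun a _ => Real.exp_neg_mul_mul_log_div_mul_pow_self (hcn a) (hQ a),
    prod_mul_distrib, prod_pow_eq_pow_sum, hc]

theorem stmt3_general (X : Type) [Fintype X] [DecidableEq X] (n : ℕ)
    (c : X → ℕ) (hc : ∑ a, c a = n)
    (Q : X → ℝ) (hQ0 : ∀ a, 0 ≤ Q a) :
    let N : ℕ := (Finset.univ.filter (fun d : X → Fin (n + 1) => ∑ a, (d a : ℕ) = n)).card
    let T : Finset (Fin n → X) := Finset.univ.filter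
      (fun x => ∀ a, (Finset.univ.filter (fun i => x i = a)).card = c a)
    let D : ℝ := ∑ a, ((c a : ℝ) / n) * Real.log (((c a : ℝ) / n) / Q a)
    let E : ℝ := if ∀ a, 0 < c a → 0 < Q a then Real.exp (-(n * D)) else 0
    ((N : ℝ))⁻¹ * E ≤ ∑ x ∈ T, ∏ i, Q (x i) ∧ (∑ x ∈ T, ∏ i, Q (x i)) ≤ E := by
  intro N T D E
  have hS : ∑ x ∈ T, ∏ i, Q (x i) = #T * ∏ a, Q a ^ c a := sum_typeClass_prod Q c
  by_cases hQ : ∀ a, 0 < c a → 0 < Q a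
  · obtain ⟨hlow, hup⟩ := card_typeClass_mul_prod_pow_self_div_mem_Icc (X := X) hc
    have hE : E = Real.exp (-(n * D)) := if_pos hQ
    have hkl : Real.exp (-(n * D)) * ∏ a, (c a : ℝ) ^ c a = n ^ n * ∏ a, Q a ^ c a :=
      exp_neg_mul_klDiv_mul_prod_pow_self hc hQ
    have hprob : ∑ x ∈ T, ∏ i, Q (x i) = (#T * ∏ a, c a ^ c a : ℕ) / n ^ n * E := by
      rw [hS, hE, div_mul_eq_mul_div, eq_div_iff (by exact_mod_cast Nat.pow_self_pos.ne')]
      push_cast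
      linear_combination -(#T : ℝ) * hkl
    have hE0 : 0 ≤ E := hE ▸ Real.exp_nonneg _
    rw [hprob]
    exact ⟨mul_le_mul_of_nonneg_right hlow hE0, mul_le_of_le_one_left hE0 hup⟩
  · have hE : E = 0 := if_neg hQ
    push Not at hQ
    obtain ⟨a, hca, hQa⟩ := hQ
    have hzero : ∏ a, Q a ^ c a = 0 :=
      prod_eq_zero (mem_univ a) (by rw [le_antisymm hQa (hQ0 a), zero_pow hca.ne'])
    simp [hS, hE, hzero]

/-- Probability of a type class: for a type `P ∈ P_n(X)` (counts `c` with `∑ c = n`) and any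
distribution `Q` on `X`, `|P_n(X)|⁻¹ · exp(-n·D(P‖Q)) ≤ Q^n(T_P) ≤ exp(-n·D(P‖Q))`,
where `exp(-n·D(P‖Q))` is interpreted as `0` when `D(P‖Q) = ∞`. -/
theorem stmt3 (X : Type) [Fintype X] [DecidableEq X] (n : ℕ) (hn : 0 < n)
    (c : X → ℕ) (hc : ∑ a, c a = n)
    (Q : X → ℝ) (hQ0 : ∀ a, 0 ≤ Q a) (hQ1 : ∑ a, Q a = 1) :
    let N : ℕ := (Finset.univ.filter (fun d : X → Fin (n + 1) => ∑ a, (d a : ℕ) = n)).card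
    let T : Finset (Fin n → X) := Finset.univ.filter
      (fun x => ∀ a, (Finset.univ.filter (fun i => x i = a)).card = c a)
    let D : ℝ := ∑ a, ((c a : ℝ) / n) * Real.log (((c a : ℝ) / n) / Q a)
    let E : ℝ := if ∀ a, 0 < c a → 0 < Q a then Real.exp (-(n * D)) else 0
    ((N : ℝ))⁻¹ * E ≤ ∑ x ∈ T, ∏ i, Q (x i) ∧ (∑ x ∈ T, ∏ i, Q (x i)) ≤ E :=
  stmt3_general X n c hc Q hQ0
end

section
/- The ε-information spectrum divergence satisfies the sifting bound: if P is a distribution on finite Z and Q = ∑_k α_k Q_k is a countable convex combination of distributions Q_k with weights α_k > 0 summing to 1, then D_s^ε(P‖Q) ≤ inf_k { D_s^ε(P‖Q_k) + log(1/α_k) }. -/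
open scoped Classical

/-- Log-likelihood ratio `log(P(z)/Q(z))` with extended-real conventions:
`+∞` when `Q(z) = 0 < P(z)` and `-∞` when `P(z) = 0`. -/
noncomputable def specLLR {Z : Type} (P Q : Z → ℝ) (z : Z) : EReal :=
  if P z = 0 then ⊥ else if Q z = 0 then ⊤ else ((Real.log (P z / Q z) : ℝ) : EReal)

/-- The ε-information spectrum divergence
`D_s^ε(P‖Q) = sup{R : P({z : log(P(z)/Q(z)) ≤ R}) ≤ ε}` (extended-real valued). -/
noncomputable def Ds {Z : Type} [Fintype Z] (P Q : Z → ℝ) (ε : ℝ) : EReal :=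
  sSup {R : EReal | ∑ z ∈ Finset.univ.filter (fun z => specLLR P Q z ≤ R), P z ≤ ε}

/-!
Since `Q ≥ αₖ Qₖ` pointwise, `log (P / Q) ≤ log (P / Qₖ) + log (1 / αₖ)` everywhere. Hence every
threshold `R` admissible for `Q` yields the admissible threshold `R - log (1 / αₖ)` for `Qₖ`, and
taking suprema gives the bound for each `k`.
-/

theorem specLLR_le_specLLR_add_log {Z : Type} (P Q Q' : Z → ℝ) (z : Z) {a : ℝ} (ha : 0 < a)
    (hQ' : 0 ≤ Q' z) (hle : a * Q' z ≤ Q z) :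
    specLLR P Q z ≤ specLLR P Q' z + ((Real.log (1 / a) : ℝ) : EReal) := by
  unfold specLLR
  by_cases hPz : P z = 0
  · simp [hPz]
  by_cases hQ'z : Q' z = 0
  · simp [hPz, hQ'z]
  have hQ'pos : 0 < Q' z := lt_of_le_of_ne hQ' (Ne.symm hQ'z)
  have hQpos : 0 < Q z := (mul_pos ha hQ'pos).trans_le hle
  simp only [hPz, hQ'z, hQpos.ne', if_false, ← EReal.coe_add, EReal.coe_le_coe_iff]
  have hlog : Real.log a + Real.log (Q' z) ≤ Real.log (Q z) := by
    rw [← Real.log_mul ha.ne' hQ'pos.ne']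
    exact Real.log_le_log (mul_pos ha hQ'pos) hle
  rw [Real.log_div hPz hQpos.ne', Real.log_div hPz hQ'z, one_div, Real.log_inv]
  linarith

theorem Ds_le_Ds_add_of_specLLR_le {Z : Type} [Fintype Z] {P Q Q' : Z → ℝ} (hP : ∀ z, 0 ≤ P z)
    (ε c : ℝ) (h : ∀ z, specLLR P Q z ≤ specLLR P Q' z + c) :
    Ds P Q ε ≤ Ds P Q' ε + c := by
  refine sSup_le fun R hR => ?_
  have hshift : R - c ∈
      {R : EReal | ∑ z ∈ Finset.univ.filter (fun z => specLLR P Q' z ≤ R), P z ≤ ε} := by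
    refine le_trans (Finset.sum_le_sum_of_subset_of_nonneg ?_ fun z _ _ => hP z) hR
    intro z hz
    simp only [Finset.mem_filter, Finset.mem_univ, true_and] at hz ⊢
    calc specLLR P Q z ≤ specLLR P Q' z + c := h z
      _ ≤ R - c + c := by gcongr
      _ = R := EReal.sub_add_cancel
  calc R = R - c + c := EReal.sub_add_cancel.symm
    _ ≤ Ds P Q' ε + c := by gcongr; exact le_sSup hshift

theorem Ds_le_Ds_add_log_of_mul_le {Z : Type} [Fintype Z] {P Q Q' : Z → ℝ} (hP : ∀ z, 0 ≤ P z)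
    (hQ' : ∀ z, 0 ≤ Q' z) {a : ℝ} (ha : 0 < a) (hle : ∀ z, a * Q' z ≤ Q z) (ε : ℝ) :
    Ds P Q ε ≤ Ds P Q' ε + ((Real.log (1 / a) : ℝ) : EReal) :=
  Ds_le_Ds_add_of_specLLR_le hP ε _ fun z => specLLR_le_specLLR_add_log P Q Q' z ha (hQ' z) (hle z)

theorem stmt7_general {Z : Type} [Fintype Z] {ι : Type}
    (P Q : Z → ℝ) (Qk : ι → Z → ℝ) (α : ι → ℝ)
    (hP0 : ∀ z, 0 ≤ P z)
    (hQk0 : ∀ k z, 0 ≤ Qk k z) (hQk1 : ∀ k, ∑ z, Qk k z = 1)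
    (hα : ∀ k, 0 < α k) (hαsum : ∑' k, α k = 1)
    (hQ : ∀ z, Q z = ∑' k, α k * Qk k z)
    (ε : ℝ) :
    Ds P Q ε ≤ ⨅ k, (Ds P (Qk k) ε + ((Real.log (1 / α k) : ℝ) : EReal)) := by
  have hα_summable : Summable α := by
    by_contra h
    rw [tsum_eq_zero_of_not_summable h] at hαsum
    exact zero_ne_one hαsum
  have hQk_le_one : ∀ k z, Qk k z ≤ 1 := fun k z =>
    hQk1 k ▸ Finset.single_le_sum (fun i _ => hQk0 k i) (Finset.mem_univ z)
  have hcomponent_le : ∀ k z, α k * Qk k z ≤ Q z := by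
    intro k z
    have hsummable : Summable fun j => α j * Qk j z :=
      hα_summable.of_nonneg_of_le (fun j => mul_nonneg (hα j).le (hQk0 j z))
        fun j => mul_le_of_le_one_right (hα j).le (hQk_le_one j z)
    rw [hQ z]
    exact hsummable.le_tsum k fun j _ => mul_nonneg (hα j).le (hQk0 j z)
  exact le_iInf fun k => Ds_le_Ds_add_log_of_mul_le hP0 (hQk0 k) (hα k) (hcomponent_le k) ε

/-- Sifting from a countable convex combination: if `Q = ∑_k α_k Q_k` with `α_k > 0`
summing to one, then `D_s^ε(P‖Q) ≤ inf_k { D_s^ε(P‖Q_k) + log(1/α_k) }`. -/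
theorem stmt7 {Z : Type} [Fintype Z] {ι : Type} [Countable ι] [Nonempty ι]
    (P Q : Z → ℝ) (Qk : ι → Z → ℝ) (α : ι → ℝ)
    (hP0 : ∀ z, 0 ≤ P z) (hP1 : ∑ z, P z = 1)
    (hQk0 : ∀ k z, 0 ≤ Qk k z) (hQk1 : ∀ k, ∑ z, Qk k z = 1)
    (hα : ∀ k, 0 < α k) (hαsum : ∑' k, α k = 1)
    (hQ : ∀ z, Q z = ∑' k, α k * Qk k z)
    (ε : ℝ) (hε0 : 0 < ε) (hε1 : ε < 1) :
    Ds P Q ε ≤ ⨅ k, (Ds P (Qk k) ε + ((Real.log (1 / α k) : ℝ) : EReal)) :=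
  stmt7_general P Q Qk α hP0 hQk0 hQk1 hα hαsum hQ ε
end

section
/- If Q̃ and Q are distributions on finite Z with Q̃(z) ≤ γ·Q(z) for all z and some γ > 0, then D_s^ε(P‖Q̃) ≥ D_s^ε(P‖Q) - log γ for every distribution P on Z and ε ∈ (0,1). -/
open scoped Classical

/-!
Domination `Q̃ ≤ γ Q` lowers every log-likelihood ratio by at most `log γ`:
`log(P/Q) ≤ log(P/Q̃) + log γ`. Hence whenever `R` is admissible for `D_s^ε(P‖Q)`,
the sublevel set `{log(P/Q̃) ≤ R - log γ}` lies inside `{log(P/Q) ≤ R}`, so it has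
`P`-mass at most `ε` and `R - log γ` is admissible for `D_s^ε(P‖Q̃)`.
-/

theorem specLLR_le_specLLR_add_log_s8 {Z : Type} (P Q Qt : Z → ℝ) (z : Z)
    (hQt0 : 0 ≤ Qt z) {γ : ℝ} (hγ : 0 < γ) (hdom : Qt z ≤ γ * Q z) :
    specLLR P Q z ≤ specLLR P Qt z + ((Real.log γ : ℝ) : EReal) := by
  by_cases hPz : P z = 0
  · simp [specLLR, hPz]
  by_cases hQtz : Qt z = 0
  · simp [specLLR, hPz, hQtz]
  have hQtpos : 0 < Qt z := hQt0.lt_of_ne' hQtz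
  have hQz : Q z ≠ 0 := by
    rintro hQz
    rw [hQz, mul_zero] at hdom
    exact hQtz (le_antisymm hdom hQt0)
  have hlogQt : Real.log (Qt z) ≤ Real.log γ + Real.log (Q z) := by
    rw [← Real.log_mul hγ.ne' hQz]
    exact Real.log_le_log hQtpos hdom
  simp only [specLLR, hPz, hQtz, hQz, if_false, ← EReal.coe_add, EReal.coe_le_coe_iff]
  rw [Real.log_div hPz hQz, Real.log_div hPz hQtz]
  linarith

theorem Ds_sub_le_of_specLLR_le_add {Z : Type} [Fintype Z] (P Q Qt : Z → ℝ)
    (hP0 : ∀ z, 0 ≤ P z) (c : ℝ) (hLLR : ∀ z, specLLR P Q z ≤ specLLR P Qt z + c) (ε : ℝ) :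
    Ds P Q ε - c ≤ Ds P Qt ε := by
  refine EReal.sub_le_of_le_add (sSup_le fun R hR => ?_)
  have hsub : Finset.univ.filter (fun z => specLLR P Qt z ≤ R - c) ⊆
      Finset.univ.filter (fun z => specLLR P Q z ≤ R) := by
    intro z hz
    simp only [Finset.mem_filter, Finset.mem_univ, true_and] at hz ⊢
    calc specLLR P Q z ≤ specLLR P Qt z + c := hLLR z
      _ ≤ R - c + c := add_le_add_left hz _
      _ = R := EReal.sub_add_cancel
  have hadm : R - c ∈ {R : EReal | ∑ z ∈ Finset.univ.filter
      (fun z => specLLR P Qt z ≤ R), P z ≤ ε} :=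
    (Finset.sum_le_sum_of_subset_of_nonneg hsub fun z _ _ => hP0 z).trans hR
  calc R = R - c + c := EReal.sub_add_cancel.symm
    _ ≤ Ds P Qt ε + c := add_le_add_left (le_sSup hadm) _

theorem stmt8_general {Z : Type} [Fintype Z] (P Q Qt : Z → ℝ)
    (hP0 : ∀ z, 0 ≤ P z)
    (hQt0 : ∀ z, 0 ≤ Qt z)
    (γ : ℝ) (hγ : 0 < γ) (hdom : ∀ z, Qt z ≤ γ * Q z)
    (ε : ℝ) :
    Ds P Q ε - ((Real.log γ : ℝ) : EReal) ≤ Ds P Qt ε :=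
  Ds_sub_le_of_specLLR_le_add P Q Qt hP0 _
    (fun z => specLLR_le_specLLR_add_log_s8 P Q Qt z (hQt0 z) hγ (hdom z)) ε

/-- Domination bound: if `Q̃(z) ≤ γ·Q(z)` for all `z`, then
`D_s^ε(P‖Q̃) ≥ D_s^ε(P‖Q) - log γ`. -/
theorem stmt8 {Z : Type} [Fintype Z] (P Q Qt : Z → ℝ)
    (hP0 : ∀ z, 0 ≤ P z) (hP1 : ∑ z, P z = 1)
    (hQ0 : ∀ z, 0 ≤ Q z) (hQ1 : ∑ z, Q z = 1)
    (hQt0 : ∀ z, 0 ≤ Qt z) (hQt1 : ∑ z, Qt z = 1)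
    (γ : ℝ) (hγ : 0 < γ) (hdom : ∀ z, Qt z ≤ γ * Q z)
    (ε : ℝ) (hε0 : 0 < ε) (hε1 : ε < 1) :
    Ds P Q ε - ((Real.log γ : ℝ) : EReal) ≤ Ds P Qt ε :=
  stmt8_general P Q Qt hP0 hQt0 γ hγ hdom ε
end

section
/- Symbol-wise relaxation of the information spectrum divergence: for channels W, V from finite X to finite Y and any input distribution P on X, D_s^ε(P×W ‖ P×V) ≤ sup_{x ∈ X} D_s^ε(W(·|x) ‖ V(·|x)). -/
open scoped Classical

/-! The joint log-likelihood ratio at `(x, y)` is that of the channels at input `x`, because the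
common factor `P x` cancels; so the mass of `{llr ≤ R}` under `P×W` is a `P`-average of the
corresponding masses under `W(·|x)`. If `R` exceeded every `D_s^ε(W(·|x) ‖ V(·|x))`, all those
masses would exceed `ε`, hence so would their average, and `R` is not admissible for the joint
divergence. -/

noncomputable def llrMass {Z : Type} [Fintype Z] (P Q : Z → ℝ) (R : EReal) : ℝ :=
  ∑ z ∈ Finset.univ.filter (fun z => specLLR P Q z ≤ R), P z

theorem specLLR_eq_of_mul {Z Z' : Type} {P Q : Z → ℝ} {P' Q' : Z' → ℝ} {z : Z} {z' : Z'}
    {c : ℝ} (hc : c ≠ 0) (hP : P z = c * P' z') (hQ : Q z = c * Q' z') :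
    specLLR P Q z = specLLR P' Q' z' := by
  simp only [specLLR, hP, hQ, mul_eq_zero, hc, false_or, mul_div_mul_left _ _ hc]

theorem lt_llrMass_of_Ds_lt {Z : Type} [Fintype Z] {P Q : Z → ℝ} {ε : ℝ} {R : EReal}
    (h : Ds P Q ε < R) : ε < llrMass P Q R :=
  lt_of_not_ge fun hR => (le_sSup (s := {R : EReal | llrMass P Q R ≤ ε}) hR).not_gt h

theorem llrMass_prod {X Y : Type} [Fintype X] [Fintype Y] (P : X → ℝ) (W V : X → Y → ℝ)
    (R : EReal) :
    llrMass (fun p : X × Y => P p.1 * W p.1 p.2) (fun p : X × Y => P p.1 * V p.1 p.2) R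
      = ∑ x, P x * llrMass (W x) (V x) R := by
  simp only [llrMass, Finset.sum_filter, Fintype.sum_prod_type, Finset.mul_sum]
  refine Finset.sum_congr rfl fun x _ => Finset.sum_congr rfl fun y _ => ?_
  by_cases hx : P x = 0
  · simp [hx]
  · have hllr : specLLR (fun p : X × Y => P p.1 * W p.1 p.2)
        (fun p : X × Y => P p.1 * V p.1 p.2) (x, y) = specLLR (W x) (V x) y :=
      specLLR_eq_of_mul hx rfl rfl
    rw [hllr, mul_ite, mul_zero]

theorem stmt9_general {X Y : Type} [Fintype X] [Fintype Y]
    (P : X → ℝ) (W V : X → Y → ℝ)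
    (hP0 : ∀ x, 0 ≤ P x) (hP1 : ∑ x, P x = 1)
    (ε : ℝ) :
    Ds (fun p : X × Y => P p.1 * W p.1 p.2) (fun p : X × Y => P p.1 * V p.1 p.2) ε
      ≤ ⨆ x, Ds (W x) (V x) ε := by
  refine sSup_le fun R hR => le_of_not_gt fun hlt => ?_
  have hmass : ∀ x, llrMass (W x) (V x) R ∈ Set.Ioi ε := fun x =>
    lt_llrMass_of_Ds_lt ((le_iSup (fun x => Ds (W x) (V x) ε) x).trans_lt hlt)
  have havg : ε < ∑ x, P x * llrMass (W x) (V x) R :=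
    (convex_Ioi ε).sum_mem (fun x _ => hP0 x) hP1 fun x _ => hmass x
  have hjoint : llrMass (fun p : X × Y => P p.1 * W p.1 p.2)
      (fun p : X × Y => P p.1 * V p.1 p.2) R ≤ ε := hR
  rw [llrMass_prod] at hjoint
  exact hjoint.not_gt havg

/-- Symbol-wise relaxation: for channels `W, V : X → Y` and input distribution `P`,
`D_s^ε(P×W ‖ P×V) ≤ sup_{x} D_s^ε(W(·|x) ‖ V(·|x))`. -/
theorem stmt9 {X Y : Type} [Fintype X] [Fintype Y]
    (P : X → ℝ) (W V : X → Y → ℝ)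
    (hP0 : ∀ x, 0 ≤ P x) (hP1 : ∑ x, P x = 1)
    (hW0 : ∀ x y, 0 ≤ W x y) (hW1 : ∀ x, ∑ y, W x y = 1)
    (hV0 : ∀ x y, 0 ≤ V x y) (hV1 : ∀ x, ∑ y, V x y = 1)
    (ε : ℝ) (hε0 : 0 < ε) (hε1 : ε < 1) :
    Ds (fun p : X × Y => P p.1 * W p.1 p.2) (fun p : X × Y => P p.1 * V p.1 p.2) ε
      ≤ ⨆ x, Ds (W x) (V x) ε :=
  stmt9_general P W V hP0 hP1 ε
end

section
/- Lower bound relating divergences: for all distributions P, Q on a finite set Z and ε ∈ (0,1), D_h^ε(P‖Q) ≥ D_s^ε(P‖Q) - log(1/(1-ε)). -/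
/-!
Thresholding the log-likelihood ratio at any `r` admissible for `D_s^ε` gives a deterministic test
of type-I error at most `ε`. On its rejection region `Q ≤ e^{-r} P`, so its type-II error is at
most `e^{-r}`; hence `-log β_{1-ε} ≥ r`, i.e. `D_s^ε ≤ -log β_{1-ε} = D_h^ε + log(1/(1-ε))`.
-/

open scoped Classical

/-- Minimum type-II error over randomized tests with type-I error at most `ε`. -/
noncomputable def betaHT {Z : Type} [Fintype Z] (P Q : Z → ℝ) (ε : ℝ) : ℝ :=
  sInf {b : ℝ | ∃ δ : Z → ℝ, (∀ z, 0 ≤ δ z ∧ δ z ≤ 1) ∧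
    (∑ z, P z * δ z) ≤ ε ∧ b = ∑ z, Q z * (1 - δ z)}

/-- The ε-hypothesis testing divergence, `⊤` when `β_{1-ε}(P,Q) = 0`. -/
noncomputable def Dh {Z : Type} [Fintype Z] (P Q : Z → ℝ) (ε : ℝ) : EReal :=
  if betaHT P Q ε = 0 then ⊤ else ((-Real.log (betaHT P Q ε / (1 - ε)) : ℝ) : EReal)

open Finset

section HypothesisTesting

variable {Z : Type} {P Q : Z → ℝ}

theorem le_exp_neg_mul_of_lt_specLLR {z : Z} {r : ℝ} (hP : 0 ≤ P z)
    (h : (r : EReal) < specLLR P Q z) : Q z ≤ Real.exp (-r) * P z := by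
  rcases le_or_gt (Q z) 0 with hQ | hQ
  · exact hQ.trans (mul_nonneg (Real.exp_pos _).le hP)
  have hPz : P z ≠ 0 := by
    rintro hPz
    simp [specLLR, hPz] at h
  have hPpos : 0 < P z := lt_of_le_of_ne hP (Ne.symm hPz)
  rw [specLLR, if_neg hPz, if_neg hQ.ne', EReal.coe_lt_coe_iff,
    Real.lt_log_iff_exp_lt (div_pos hPpos hQ), lt_div_iff₀ hQ] at h
  rw [Real.exp_neg, inv_mul_eq_div, le_div_iff₀ (Real.exp_pos r)]
  linarith

variable [Fintype Z] {ε : ℝ}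

theorem zero_mem_lowerBounds_typeIIErrors (hQ0 : ∀ z, 0 ≤ Q z) :
    0 ∈ lowerBounds {b : ℝ | ∃ δ : Z → ℝ, (∀ z, 0 ≤ δ z ∧ δ z ≤ 1) ∧
      (∑ z, P z * δ z) ≤ ε ∧ b = ∑ z, Q z * (1 - δ z)} := by
  rintro b ⟨δ, hδ, -, rfl⟩
  exact sum_nonneg fun z _ => mul_nonneg (hQ0 z) (sub_nonneg.2 (hδ z).2)

theorem betaHT_nonneg (hQ0 : ∀ z, 0 ≤ Q z) : 0 ≤ betaHT P Q ε :=
  Real.sInf_nonneg (zero_mem_lowerBounds_typeIIErrors hQ0)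

theorem betaHT_le_sum_compl (hQ0 : ∀ z, 0 ≤ Q z) (S : Finset Z) (hS : ∑ z ∈ S, P z ≤ ε) :
    betaHT P Q ε ≤ ∑ z ∈ Sᶜ, Q z := by
  refine csInf_le ⟨0, zero_mem_lowerBounds_typeIIErrors hQ0⟩ ⟨fun z => if z ∈ S then 1 else 0, fun z => ?_, ?_, ?_⟩
  · dsimp only
    split_ifs <;> norm_num
  · simpa only [mul_ite, mul_one, mul_zero, sum_ite_mem, univ_inter] using hS
  · simp only [mul_sub, mul_one, mul_ite, mul_zero, sum_sub_distrib, sum_ite_mem, univ_inter]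
    exact eq_sub_of_add_eq (sum_compl_add_sum S Q)

theorem sum_compl_filter_specLLR_le (hP0 : ∀ z, 0 ≤ P z) (r : ℝ) :
    ∑ z ∈ (univ.filter fun z => specLLR P Q z ≤ r)ᶜ, Q z ≤ Real.exp (-r) * ∑ z, P z :=
  calc ∑ z ∈ (univ.filter fun z => specLLR P Q z ≤ r)ᶜ, Q z
      ≤ ∑ z ∈ (univ.filter fun z => specLLR P Q z ≤ r)ᶜ, Real.exp (-r) * P z :=
        sum_le_sum fun z hz => le_exp_neg_mul_of_lt_specLLR (hP0 z) (by simpa using hz)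
    _ ≤ ∑ z, Real.exp (-r) * P z :=
        sum_le_sum_of_subset_of_nonneg (subset_univ _)
          fun z _ _ => mul_nonneg (Real.exp_pos _).le (hP0 z)
    _ = Real.exp (-r) * ∑ z, P z := (mul_sum _ _ _).symm

theorem le_neg_log_betaHT (hP0 : ∀ z, 0 ≤ P z) (hP1 : ∑ z, P z = 1) (hQ0 : ∀ z, 0 ≤ Q z)
    (hβ : 0 < betaHT P Q ε) {r : ℝ}
    (hr : ∑ z ∈ univ.filter (fun z => specLLR P Q z ≤ r), P z ≤ ε) :
    r ≤ -Real.log (betaHT P Q ε) := by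
  have hβr : betaHT P Q ε ≤ Real.exp (-r) := by
    simpa only [hP1, mul_one] using
      (betaHT_le_sum_compl hQ0 _ hr).trans (sum_compl_filter_specLLR_le hP0 r)
  linarith [(Real.log_le_iff_le_exp hβ).2 hβr]

theorem Ds_le_neg_log_betaHT (hP0 : ∀ z, 0 ≤ P z) (hP1 : ∑ z, P z = 1) (hQ0 : ∀ z, 0 ≤ Q z)
    (hε1 : ε < 1) (hβ : 0 < betaHT P Q ε) :
    Ds P Q ε ≤ ((-Real.log (betaHT P Q ε) : ℝ) : EReal) := by
  refine sSup_le fun R hR => ?_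
  induction R using EReal.rec with
  | bot => exact bot_le
  | top =>
    simp only [Set.mem_ofPred_eq, le_top, filter_true, hP1] at hR
    linarith
  | coe r => exact EReal.coe_le_coe_iff.2 (le_neg_log_betaHT hP0 hP1 hQ0 hβ hR)

end HypothesisTesting

theorem stmt10_general {Z : Type} [Fintype Z] (P Q : Z → ℝ)
    (hP0 : ∀ z, 0 ≤ P z) (hP1 : ∑ z, P z = 1)
    (hQ0 : ∀ z, 0 ≤ Q z)
    (ε : ℝ) (hε1 : ε < 1) :
    Ds P Q ε - ((Real.log (1 / (1 - ε)) : ℝ) : EReal) ≤ Dh P Q ε := by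
  rcases (betaHT_nonneg (P := P) (ε := ε) hQ0).eq_or_lt with hβ | hβ
  · rw [Dh, if_pos hβ.symm]
    exact le_top
  have hDh : -Real.log (betaHT P Q ε / (1 - ε))
      = -Real.log (betaHT P Q ε) - Real.log (1 / (1 - ε)) := by
    rw [Real.log_div hβ.ne' (by linarith), one_div, Real.log_inv]
    ring
  rw [Dh, if_neg hβ.ne', hDh, EReal.coe_sub]
  exact EReal.sub_le_sub (Ds_le_neg_log_betaHT hP0 hP1 hQ0 hε1 hβ) le_rfl

/-- Lower bound relating divergences: `D_h^ε(P‖Q) ≥ D_s^ε(P‖Q) - log(1/(1-ε))`. -/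
theorem stmt10 {Z : Type} [Fintype Z] (P Q : Z → ℝ)
    (hP0 : ∀ z, 0 ≤ P z) (hP1 : ∑ z, P z = 1)
    (hQ0 : ∀ z, 0 ≤ Q z) (hQ1 : ∑ z, Q z = 1)
    (ε : ℝ) (hε0 : 0 < ε) (hε1 : ε < 1) :
    Ds P Q ε - ((Real.log (1 / (1 - ε)) : ℝ) : EReal) ≤ Dh P Q ε :=
  stmt10_general P Q hP0 hP1 hQ0 ε hε1
end

section
/- In Costa's dirty-paper setting, the difference of mutual informations f(α) = (1/2)·log( snr·(snr + inr + 1) / ( snr·inr·(1-α)² + snr + α²·inr ) ) is maximized over α ∈ ℝ at α* = snr/(snr+1), and f(α*) = (1/2)·log(1 + snr), independent of inr. -/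
/-!
Multiplying the denominator by `snr + 1` completes the square in `α`:
`(snr + 1)·g(α) = snr·(snr + inr + 1) + inr·((snr + 1)·α - snr)²`.
So for `inr ≥ 0` the denominator is smallest exactly where the square vanishes, at
`α* = snr / (snr + 1)`, where the ratio inside the logarithm collapses to `snr + 1`.
-/

open Real

def dirtyPaperDenom (snr inr α : ℝ) : ℝ :=
  snr * inr * (1 - α) ^ 2 + snr + α ^ 2 * inr

theorem add_one_mul_dirtyPaperDenom (snr inr α : ℝ) :
    (snr + 1) * dirtyPaperDenom snr inr α
      = snr * (snr + inr + 1) + inr * ((snr + 1) * α - snr) ^ 2 := by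
  unfold dirtyPaperDenom
  ring

theorem dirtyPaperDenom_pos {snr inr : ℝ} (hs : 0 < snr) (hi : 0 ≤ inr) (α : ℝ) :
    0 < dirtyPaperDenom snr inr α := by
  unfold dirtyPaperDenom
  positivity

theorem dirtyPaperDenom_div_add_one {snr : ℝ} (inr : ℝ) (hs : snr + 1 ≠ 0) :
    dirtyPaperDenom snr inr (snr / (snr + 1)) = snr * (snr + inr + 1) / (snr + 1) := by
  rw [eq_div_iff hs, mul_comm, add_one_mul_dirtyPaperDenom, mul_div_cancel₀ _ hs]
  ring

theorem dirtyPaperDenom_div_add_one_le {snr inr : ℝ} (hs : 0 < snr + 1) (hi : 0 ≤ inr)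
    (α : ℝ) : dirtyPaperDenom snr inr (snr / (snr + 1)) ≤ dirtyPaperDenom snr inr α := by
  rw [dirtyPaperDenom_div_add_one inr hs.ne', div_le_iff₀ hs, mul_comm (dirtyPaperDenom _ _ _),
    add_one_mul_dirtyPaperDenom]
  exact le_add_of_nonneg_right (mul_nonneg hi (sq_nonneg _))

/-- Costa's dirty-paper optimization: the function
`f(α) = (1/2)·log( snr(snr+inr+1) / (snr·inr·(1-α)² + snr + α²·inr) )`
is maximized over `α ∈ ℝ` at `α* = snr/(snr+1)`, and `f(α*) = (1/2)·log(1+snr)`,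
independently of `inr`. -/
theorem stmt17 (snr inr : ℝ) (hs : 0 < snr) (hi : 0 < inr) :
    let f : ℝ → ℝ := fun α =>
      (1 / 2) * Real.log (snr * (snr + inr + 1) /
        (snr * inr * (1 - α) ^ 2 + snr + α ^ 2 * inr))
    (∀ α : ℝ, f α ≤ f (snr / (snr + 1)))
    ∧ f (snr / (snr + 1)) = (1 / 2) * Real.log (1 + snr) := by
  intro f
  have hs1 : 0 < snr + 1 := by linarith
  have hN : 0 < snr * (snr + inr + 1) := by positivity
  have hf : ∀ α, f α = 1 / 2 * Real.log (snr * (snr + inr + 1) / dirtyPaperDenom snr inr α) :=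
    fun _ => rfl
  refine ⟨fun α => ?_, ?_⟩
  · rw [hf, hf]
    gcongr
    · exact div_pos hN (dirtyPaperDenom_pos hs hi.le α)
    · exact dirtyPaperDenom_pos hs hi.le _
    · exact dirtyPaperDenom_div_add_one_le hs1 hi.le α
  · rw [hf, dirtyPaperDenom_div_add_one inr hs1.ne', div_div_cancel₀ hN.ne', add_comm]
end
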